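/- Recursion for Kazhdan–Lusztig–Stanley polynomials of a pircon system: Let {x,z} = {q,−1}, let (R^q_{u,w}) and (R^{−1}_{u,w}) be the two families of Kazhdan–Lusztig R-polynomials of a pircon system (P,S), both satisfying the up-down symmetry, and let (P^z_{u,w}) be the Kazhdan–Lusztig–Stanley polynomials of (R^z_{u,w}). For u, u' ∈ P let μ(u,u') denote the coefficient of q^{(ρ(u,u')−1)/2} in P^z_{u,u'} (interpreted as 0 when ρ(u,u') is even). Let v, w ∈ P with v ≤ w, let M ∈ S with M(w) ⋖ w, and set v' = min{v, M(v)}, v'' = max{v, M(v)}, and x_v = x if M(v) = v and x_v = q otherwise. Then P^z_{v,w} = P^z_{v',M(w)} + x_v·P^z_{v'',M(w)} − Σ_u μ(u,M(w))·q^{ρ(u,w)/2}·P^z_{v,u}, where the sum runs over all u ∈ P with M(u) ≤ u if x = q, and over all u ∈ P with M(u) < u if x = −1. -/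

import Mathlib

/-!
Write `A_t = P_{t',M w} + x_t · P_{t'',M w}`, which is `T_M + 1` applied to the column
`P_{·,M w}`, and `B_t = Σ_{u ∈ U} μ(u, M w) q^{ρ(u,w)/2} P_{t,u}`. The column `t ↦ P_{t,w}` is
the unique solution of `Σ_s R_{t,s} f_s = q^{ρ(t,w)} f̄_t` with `f_w = 1` and, for `t < w`, `f_t`
supported in `q`-degrees `[0, ρ(t,w)/2)`. Each column `P_{·,u}` solves this equation for `u`,
hence `B` solves it for `w`; the recursion and the up-down symmetry of `R` say that `R`
intertwines `T_M + 1`, so `A` solves it for `w` as well. The `μ`-terms of `B` cancel exactly the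
top coefficients of `A` that break the degree bound, and uniqueness gives `A - B = P_{·,w}`.
-/

open Polynomial LaurentPolynomial

noncomputable section

/-- A quasi special partial matching of a poset `P`: an involution `M : P → P` such that
for every `t`, either `M t ⋖ t`, `M t = t`, or `t ⋖ M t`, and whenever `t ⋖ u` and
`M t ≠ u`, then `M t < M u`. -/
def IsQSPM {P : Type*} [PartialOrder P] (M : P → P) : Prop :=
  Function.Involutive M ∧
  (∀ t : P, M t ⋖ t ∨ M t = t ∨ t ⋖ M t) ∧
  ∀ t u : P, t ⋖ u → M t ≠ u → M t < M u

/-- A quasi special partial matching of the order ideal `P_{≤w}`. -/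
def IsQSPMOn {P : Type*} [PartialOrder P] (w : P) (M : P → P) : Prop :=
  (∀ u : P, u ≤ w → M u ≤ w) ∧
  (∀ u : P, u ≤ w → M (M u) = u) ∧
  (∀ u : P, u ≤ w → M u ⋖ u ∨ M u = u ∨ u ⋖ M u) ∧
  ∀ u t : P, u ≤ w → t ≤ w → u ⋖ t → M u ≠ t → M u < M t

/-- A special partial matching of the order ideal `P_{≤w}` (whose maximum is `w`). -/
def IsSPMOn {P : Type*} [PartialOrder P] (w : P) (M : P → P) : Prop :=
  IsQSPMOn w M ∧ M w ⋖ w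

/-- A pircon: for every non-minimal `x`, the order ideal `P_{≤x}` is finite and admits
a special partial matching. -/
def IsPircon (P : Type*) [PartialOrder P] : Prop :=
  ∀ x : P, ¬ IsMin x → (Set.Iic x).Finite ∧ ∃ M : P → P, IsSPMOn x M

/-- A pircon system `(P,S)`: `S` is a set of quasi special partial matchings of `P` such
that every `w ≠ ⊥` is matched downwards by some `M ∈ S`. -/
def IsPirconSystem {P : Type*} [PartialOrder P] [OrderBot P] (S : Set (P → P)) : Prop :=
  (∀ M ∈ S, IsQSPM M) ∧ ∀ w : P, w ≠ ⊥ → ∃ M ∈ S, M w ⋖ w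

/-- The defining properties of the family of Kazhdan--Lusztig `R^x`-polynomials of a
pircon system `(P,S)`, where `x ∈ {q,-1} ⊆ ℤ[q]` (here `q` is the variable `X`). -/
def IsKLRFamily {P : Type*} [PartialOrder P] (S : Set (P → P)) (x : Polynomial ℤ)
    (R : P → P → Polynomial ℤ) : Prop :=
  (∀ u w : P, ¬ u ≤ w → R u w = 0) ∧
  (∀ w : P, R w w = 1) ∧
  ∀ M ∈ S, ∀ u w : P, M w ⋖ w →
    (M u ⋖ u → R u w = R (M u) (M w)) ∧
    (u ⋖ M u → R u w = (X - 1) * R u (M w) + X * R (M u) (M w)) ∧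
    (M u = u → R u w = (X - 1 - x) * R u (M w))

/-- The up-down symmetry for a family of Kazhdan--Lusztig `R^x`-polynomials. -/
def UpDownSymmetry {P : Type*} [PartialOrder P] (S : Set (P → P)) (x : Polynomial ℤ)
    (R : P → P → Polynomial ℤ) : Prop :=
  ∀ M ∈ S, ∀ u w : P, u ⋖ M u →
    (w ⋖ M w → R u w = R (M u) (M w)) ∧
    (M w ⋖ w → R u w = (X - 1) * R (M u) w + X * R (M u) (M w)) ∧
    (M w = w → R u w = (X - 1 - x) * R (M u) w)

/-!  The ring `A = ℤ[q^{1/2}, q^{-1/2}]` is realized as `LaurentPolynomial ℤ`, with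
`q^{1/2} = T 1` and hence `q = T 2`; the bar involution `q^{1/2} ↦ q^{-1/2}` is
`LaurentPolynomial.invert`.  The free `A`-module `𝓜_P = ⊕_{u ∈ P} A·m_u` is realized as
the finitely supported elements of `P → A`, the basis element `m_u` corresponding to the
indicator of `u`. -/

/-- Evaluation of a polynomial in `q` at `q = T 2`, i.e. the inclusion
`ℤ[q] → ℤ[q^{1/2}, q^{-1/2}]`. -/
def evq (p : Polynomial ℤ) : LaurentPolynomial ℤ :=
  Polynomial.aeval (T 2 : LaurentPolynomial ℤ) p

open Classical in
/-- The `y`-action of the operator `T_M` on `𝓜_P`, written in coordinates: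
`T_M(m_v) = m_{M v}` if `v ⋖ M v`; `T_M(m_v) = q·m_{M v} + (q-1)·m_v` if `M v ⋖ v`;
and `T_M(m_v) = y·m_v` if `M v = v`. -/
def TMact {P : Type*} [PartialOrder P] (M : P → P) (y : LaurentPolynomial ℤ)
    (f : P → LaurentPolynomial ℤ) : P → LaurentPolynomial ℤ := fun u =>
  if M u = u then y * f u
  else if M u < u then f (M u) + (T 2 - 1) * f u
  else T 2 * f (M u)

/-- The map `ι^x` on `𝓜_P`, written in coordinates:
`ι^x(Σ_v f_v·m_v) = Σ_v f̄_v·q^{-ρ(v)}·Σ_{u} (-1)^{ρ(u,v)}·R^x_{u,v}(q)·m_u`. -/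
def iotaAct {P : Type*} [PartialOrder P] (ρ : P → ℕ) (R : P → P → Polynomial ℤ)
    (f : P → LaurentPolynomial ℤ) : P → LaurentPolynomial ℤ := fun u =>
  ∑ᶠ v : P, invert (f v) * (T (-2 * (ρ v : ℤ)) * ((-1) ^ (ρ v - ρ u) * evq (R u v)))

/-- The involution `j_P` of `𝓜_P`: `j_P(a·m_w) = ā·(-q^{-1})^{ρ(w)}·m_w`. -/
def jPact {P : Type*} [PartialOrder P] (ρ : P → ℕ) (f : P → LaurentPolynomial ℤ) :
    P → LaurentPolynomial ℤ := fun w => invert (f w) * (-T (-2)) ^ (ρ w)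

/-- `deg f < k/2`. -/
def DegLtHalf (f : Polynomial ℤ) (k : ℤ) : Prop :=
  f = 0 ∨ 2 * (f.natDegree : ℤ) < k

/-- The Kazhdan--Lusztig--Stanley polynomials of the kernel `(R_{u,w})`: `P_{u,w} = 0`
unless `u ≤ w`, `P_{w,w} = 1`, `deg P_{u,w} < ρ(u,w)/2` for `u < w`, and
`q^{ρ(u,w)}·P_{u,w}(q⁻¹) = Σ_{u ≤ t ≤ w} R_{u,t}(q)·P_{t,w}(q)`. -/
def IsKLSFamily {P : Type*} [PartialOrder P] (ρ : P → ℕ)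
    (R Pp : P → P → Polynomial ℤ) : Prop :=
  (∀ u w : P, ¬ u ≤ w → Pp u w = 0) ∧
  (∀ w : P, Pp w w = 1) ∧
  (∀ u w : P, u < w → DegLtHalf (Pp u w) ((ρ w : ℤ) - (ρ u : ℤ))) ∧
  ∀ u w : P, u ≤ w →
    T (2 * ((ρ w : ℤ) - (ρ u : ℤ))) * invert (evq (Pp u w)) =
      ∑ᶠ t ∈ Set.Icc u w, evq (R u t) * evq (Pp t w)

/-- The Kazhdan--Lusztig element `C^x_w ∈ 𝓜_P`, in coordinates: its coefficient on `m_v`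
is `q^{ρ(w)/2}·(-1)^{ρ(v,w)}·q^{-ρ(v)}·P^x_{v,w}(q^{-1})`. -/
def Cel {P : Type*} [PartialOrder P] (ρ : P → ℕ) (Pp : P → P → Polynomial ℤ) (w : P) :
    P → LaurentPolynomial ℤ := fun v =>
  T (ρ w : ℤ) * ((-1) ^ (ρ w - ρ v) * (T (-2 * (ρ v : ℤ)) * invert (evq (Pp v w))))

/-- The Kazhdan--Lusztig element `C'^x_w ∈ 𝓜_P`, in coordinates: its coefficient on
`m_v` is `q^{-ρ(w)/2}·P^z_{v,w}(q)` (the family `Pp` fed here is `P^z`). -/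
def Cel' {P : Type*} [PartialOrder P] (ρ : P → ℕ) (Pp : P → P → Polynomial ℤ) (w : P) :
    P → LaurentPolynomial ℤ := fun v =>
  T (-(ρ w : ℤ)) * evq (Pp v w)

open Classical in
/-- `μ(u,u')`: the coefficient of `q^{(ρ(u,u')-1)/2}` in `P^z_{u,u'}`, interpreted as `0`
when `ρ(u,u')` is even. -/
def muC {P : Type*} [PartialOrder P] (ρ : P → ℕ) (Pz : P → P → Polynomial ℤ)
    (u u' : P) : ℤ :=
  if (ρ u' - ρ u) % 2 = 1 then (Pz u u').coeff ((ρ u' - ρ u - 1) / 2) else 0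

theorem Polynomial.X_ne_neg_one {R : Type*} [Ring R] [Nontrivial R] : (X : R[X]) ≠ -1 := by
  simpa using X_ne_C (-1 : R)

theorem LaurentPolynomial.coeff_T_mul {R : Type*} [Semiring R] (n k : ℤ) (f : R[T;T⁻¹]) :
    (T n * f).coeff k = f.coeff (k - n) := by
  rw [T, AddMonoidAlgebra.coeff_single_mul_apply, one_mul, neg_add_eq_sub]

theorem LaurentPolynomial.eq_zero_of_eq_T_mul_invert {R : Type*} [CommSemiring R]
    {f : R[T;T⁻¹]} {n : ℤ} (hf : f = T (2 * n) * invert f)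
    (hvanish : ∀ k, (k < 0 ∨ n ≤ k) → f.coeff k = 0) : f = 0 := by
  ext k
  by_cases hk : k < 0 ∨ n ≤ k
  · simp [hvanish k hk]
  · rw [hf, coeff_T_mul, invert_apply, hvanish _ (by omega)]
    simp

section Evq

@[simp] theorem evq_add (p q : ℤ[X]) : evq (p + q) = evq p + evq q := map_add _ p q

@[simp] theorem evq_mul (p q : ℤ[X]) : evq (p * q) = evq p * evq q := map_mul _ p q

@[simp] theorem evq_neg (p : ℤ[X]) : evq (-p) = -evq p := map_neg _ p

@[simp] theorem evq_one : evq 1 = 1 := map_one _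

@[simp] theorem evq_zero : evq 0 = 0 := map_zero _

@[simp] theorem evq_X : evq X = T 2 := aeval_X _

theorem coeff_evq_monomial (n : ℕ) (a k : ℤ) :
    (evq (monomial n a)).coeff k = if k = 2 * n then a else 0 := by
  rw [evq, aeval_monomial, ← LaurentPolynomial.C_eq_algebraMap, T_pow, mul_comm, coeff_T_mul,
    LaurentPolynomial.C_apply]
  simp only [sub_eq_zero, mul_comm (n : ℤ)]

theorem coeff_evq_two_mul (p : ℤ[X]) (m : ℕ) : (evq p).coeff (2 * m) = p.coeff m := by
  induction p using Polynomial.induction_on' with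
  | add p q hp hq => simp [hp, hq]
  | monomial n a => simp [coeff_evq_monomial, coeff_monomial, eq_comm]

theorem coeff_evq_eq_zero_of_forall_ne (p : ℤ[X]) {k : ℤ} (hk : ∀ m : ℕ, k ≠ 2 * m) :
    (evq p).coeff k = 0 := by
  induction p using Polynomial.induction_on' with
  | add p q hp hq => simp [hp, hq]
  | monomial n a => simp [coeff_evq_monomial, hk n]

theorem coeff_evq_eq_zero_of_degLtHalf {p : ℤ[X]} {d k : ℤ} (hp : DegLtHalf p d) (hk : d ≤ k) :
    (evq p).coeff k = 0 := by
  rcases hp with rfl | hp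
  · simp
  by_cases hk2 : ∃ m : ℕ, k = 2 * m
  · obtain ⟨m, rfl⟩ := hk2
    rw [coeff_evq_two_mul]
    exact coeff_eq_zero_of_natDegree_lt (by omega)
  · exact coeff_evq_eq_zero_of_forall_ne p (not_exists.mp hk2)

end Evq

section Order

variable {P : Type*} [PartialOrder P]

theorem exists_covBy_le_of_lt_of_finite {a b : P} (hfin : (Set.Ioc a b).Finite) (hab : a < b) :
    ∃ c, a ⋖ c ∧ c ≤ b := by
  obtain ⟨c, hc⟩ := hfin.exists_minimal ⟨b, hab, le_rfl⟩
  exact ⟨c, ⟨hc.prop.1, fun d had hdc => hc.not_prop_of_lt hdc ⟨had, hdc.le.trans hc.prop.2⟩⟩,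
    hc.prop.2⟩

theorem mapsTo_Iic_of_map_lt_map_of_covBy {M : P → P}
    (hM : ∀ t u, t ⋖ u → M t ≠ u → M t < M u) {w : P} (hw : (Set.Iic w).Finite)
    (hMw : M w ≤ w) : Set.MapsTo M (Set.Iic w) (Set.Iic w) := by
  intro p hp
  refine (hw.wellFoundedOn (r := (· > ·))).induction hp (P := fun p => M p ≤ w) ?_
  intro p hp IH
  rcases (Set.mem_Iic.mp hp).eq_or_lt with rfl | hpw
  · exact hMw
  obtain ⟨c, hpc, hcw⟩ :=
    exists_covBy_le_of_lt_of_finite (hw.subset Set.Ioc_subset_Iic_self) hpw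
  by_cases hMp : M p = c
  · exact hMp ▸ hcw
  · exact (hM p c hpc hMp).le.trans (IH c hcw hpc.lt)

theorem strictMonoOn_Iic_of_covBy {ρ : P → ℕ} (hρ : ∀ a b, a ⋖ b → ρ b = ρ a + 1) {w : P}
    (hw : (Set.Iic w).Finite) : StrictMonoOn ρ (Set.Iic w) := by
  intro u hu v hv huv
  refine (hw.wellFoundedOn (r := (· > ·))).induction hu (P := fun u => u < v → ρ u < ρ v) ?_ huv
  intro u _ IH huv
  obtain ⟨c, huc, hcv⟩ := exists_covBy_le_of_lt_of_finite
    (hw.subset fun t ht => ht.2.trans (Set.mem_Iic.mp hv)) huv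
  have hc := hρ u c huc
  rcases hcv.eq_or_lt with rfl | hcv
  · omega
  · have := IH c (hcv.le.trans (Set.mem_Iic.mp hv)) huc.lt hcv
    omega

end Order

section KLSCoefficients

variable {P : Type*} [PartialOrder P] {ρ : P → ℕ} {R Pp : P → P → ℤ[X]}

theorem muC_eq_coeff_evq (ρ : P → ℕ) (Pp : P → P → ℤ[X]) (u u' : P) :
    (muC ρ Pp u u' : ℤ) = (evq (Pp u u')).coeff ((ρ u' : ℤ) - ρ u - 1) := by
  unfold muC
  split_ifs with h
  · rw [show (ρ u' : ℤ) - ρ u - 1 = 2 * ((ρ u' - ρ u - 1) / 2 : ℕ) by omega, coeff_evq_two_mul]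
  · exact (coeff_evq_eq_zero_of_forall_ne _ fun m => by omega).symm

theorem lt_of_muC_ne_zero {u u' : P} (h : muC ρ Pp u u' ≠ 0) : ρ u < ρ u' := by
  unfold muC at h
  split_ifs at h
  · omega
  · exact absurd rfl h

theorem IsKLSFamily.le_of_muC_ne_zero (hPp : IsKLSFamily ρ R Pp) {u u' : P}
    (h : muC ρ Pp u u' ≠ 0) : u ≤ u' := by
  by_contra hle
  exact h (by simp [muC, hPp.1 u u' hle])

theorem IsKLSFamily.coeff_evq_eq_zero (hPp : IsKLSFamily ρ R Pp) {a b : P} {k : ℤ}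
    (hk : k < 0 ∨ (ρ b : ℤ) - ρ a ≤ k) (hab : a = b → k ≠ 0) : (evq (Pp a b)).coeff k = 0 := by
  rcases hk with hk | hk
  · exact coeff_evq_eq_zero_of_forall_ne _ fun m => by omega
  by_cases hle : a ≤ b
  · rcases hle.eq_or_lt with rfl | hlt
    · rw [hPp.2.1, evq_one, ← T_zero, T_apply, if_neg (Ne.symm (hab rfl))]
    · exact coeff_evq_eq_zero_of_degLtHalf (hPp.2.2.1 a b hlt) hk
  · simp [hPp.1 a b hle]

theorem IsKLSFamily.coeff_evq_eq_ite (hPp : IsKLSFamily ρ R Pp) {a b : P} (hab : a ≠ b) {j : ℤ}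
    (hj : j < 0 ∨ (ρ b : ℤ) - ρ a - 1 ≤ j) :
    (evq (Pp a b)).coeff j = if j = (ρ b : ℤ) - ρ a - 1 then muC ρ Pp a b else 0 := by
  split_ifs with h
  · rw [h, muC_eq_coeff_evq]
  · exact hPp.coeff_evq_eq_zero (by omega) fun h' => absurd h' hab

open Classical in
theorem IsKLSFamily.coeff_sum_intCast_mul_T (hPp : IsKLSFamily ρ R Pp) (I : Finset P)
    (c : P → ℤ) {w : P} (hc : ∀ u ∈ I, c u ≠ 0 → ρ u < ρ w) {a : P} {k : ℤ}
    (hk : k < 0 ∨ (ρ w : ℤ) - ρ a ≤ k) :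
    (∑ u ∈ I, (c u : ℤ[T;T⁻¹]) * (T ((ρ w : ℤ) - ρ u) * evq (Pp a u))).coeff k =
      if a ∈ I ∧ k = (ρ w : ℤ) - ρ a then c a else 0 := by
  have hterm : ∀ u ∈ I, ((c u : ℤ[T;T⁻¹]) * (T ((ρ w : ℤ) - ρ u) * evq (Pp a u))).coeff k =
      if a = u then (if k = (ρ w : ℤ) - ρ a then c a else 0) else 0 := by
    intro u hu
    rw [← zsmul_eq_mul, AddMonoidAlgebra.coeff_smul_apply, smul_eq_mul, coeff_T_mul]
    split_ifs with hau hka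
    · subst hau
      rw [hPp.2.1, evq_one, ← T_zero, T_apply, if_pos (by omega), mul_one]
    · subst hau
      rw [hPp.2.1, evq_one, ← T_zero, T_apply, if_neg (by omega), mul_zero]
    · by_cases hcu : c u = 0
      · rw [hcu, zero_mul]
      · have := hc u hu hcu
        rw [hPp.coeff_evq_eq_zero (by omega) fun h => absurd h hau, mul_zero]
  rw [AddMonoidAlgebra.coeff_sum, Finsupp.finsetSum_apply, Finset.sum_congr rfl hterm,
    Finset.sum_ite_eq I a, ite_and]

end KLSCoefficients

section Column

variable {P : Type*} {ρ : P → ℕ} {R Pp : P → P → ℤ[X]} {s : Finset P}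

/-- `f t` plays the role of `P_{t,w}`: the functional equation of `IsKLSFamily`, summed over
`s ⊇ P_{≤w}`. -/
def IsKLSColumn (ρ : P → ℕ) (R : P → P → ℤ[X]) (s : Finset P) (w : P) (f : P → ℤ[T;T⁻¹]) :
    Prop :=
  ∀ a, ∑ t ∈ s, evq (R a t) * f t = T (2 * ((ρ w : ℤ) - ρ a)) * invert (f a)

theorem IsKLSFamily.isKLSColumn [PartialOrder P] (hPp : IsKLSFamily ρ R Pp)
    (hR : ∀ u t, ¬ u ≤ t → R u t = 0) {u : P} (hs : ∀ t ≤ u, t ∈ s) :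
    IsKLSColumn ρ R s u (fun t => evq (Pp t u)) := by
  intro a
  dsimp only
  have hterm : ∀ t, ¬ (a ≤ t ∧ t ≤ u) → evq (R a t) * evq (Pp t u) = 0 := by
    intro t ht
    by_cases hat : a ≤ t
    · simp [hPp.1 t u fun htu => ht ⟨hat, htu⟩]
    · simp [hR a t hat]
  by_cases hau : a ≤ u
  · rw [hPp.2.2.2 a u hau, finsum_mem_eq_sum_of_inter_support_eq]
    ext t
    simp only [Set.mem_inter_iff, Finset.mem_coe, Function.mem_support, Set.mem_Icc]
    exact ⟨fun h => ⟨hs t h.1.2, h.2⟩, fun h => ⟨not_not.mp (mt (hterm t) h.2), h.2⟩⟩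
  · rw [hPp.1 a u hau, Finset.sum_eq_zero fun t _ => hterm t fun h => hau (h.1.trans h.2)]
    simp

theorem IsKLSColumn.sub {w : P} {f g : P → ℤ[T;T⁻¹]} (hf : IsKLSColumn ρ R s w f)
    (hg : IsKLSColumn ρ R s w g) : IsKLSColumn ρ R s w (f - g) := by
  intro a
  simp only [Pi.sub_apply, mul_sub, Finset.sum_sub_distrib, hf a, hg a, map_sub]

theorem IsKLSColumn.intCast_mul_T {u : P} {f : P → ℤ[T;T⁻¹]} (hf : IsKLSColumn ρ R s u f)
    (c : ℤ) (w : P) :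
    IsKLSColumn ρ R s w (fun t => (c : ℤ[T;T⁻¹]) * (T ((ρ w : ℤ) - ρ u) * f t)) := by
  intro a
  have hT : (T ((ρ w : ℤ) - ρ u) * T (2 * ((ρ u : ℤ) - ρ a)) : ℤ[T;T⁻¹]) =
      T (2 * ((ρ w : ℤ) - ρ a)) * T (-((ρ w : ℤ) - ρ u)) := by
    rw [← T_add, ← T_add]
    ring_nf
  simp only [← Finset.mul_sum, mul_left_comm (evq _), hf a, map_mul, map_intCast, invert_T]
  linear_combination (c : ℤ[T;T⁻¹]) * invert (f a) * hT

theorem isKLSColumn_finset_sum {ι : Type*} (I : Finset ι) {w : P} {g : ι → P → ℤ[T;T⁻¹]}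
    (hg : ∀ i ∈ I, IsKLSColumn ρ R s w (g i)) :
    IsKLSColumn ρ R s w (fun t => ∑ i ∈ I, g i t) := by
  intro a
  simp only [Finset.mul_sum, map_sum]
  rw [Finset.sum_comm]
  exact Finset.sum_congr rfl fun i hi => hg i hi a

theorem IsKLSFamily.eq_of_isKLSColumn [PartialOrder P] (hPp : IsKLSFamily ρ R Pp)
    (hR0 : ∀ u t, ¬ u ≤ t → R u t = 0) (hR1 : ∀ u, R u u = 1) {w : P}
    (hs : ∀ t, t ∈ s ↔ t ≤ w) {f : P → ℤ[T;T⁻¹]} (hf : IsKLSColumn ρ R s w f) (hfw : f w = 1)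
    (hdeg : ∀ a < w, ∀ k, (k < 0 ∨ (ρ w : ℤ) - ρ a ≤ k) → (f a).coeff k = 0)
    {a : P} (ha : a ≤ w) : f a = evq (Pp a w) := by
  have hD := (hPp.isKLSColumn hR0 fun t => (hs t).2).sub hf
  set D := (fun t => evq (Pp t w)) - f
  suffices D a = 0 from (sub_eq_zero.mp this).symm
  refine (s.finite_toSet.wellFoundedOn (r := (· > ·))).induction ((hs a).2 ha)
    (P := fun a => D a = 0) ?_
  intro a ha IH
  rcases ((hs a).1 ha).eq_or_lt with rfl | haw
  · simp [D, hPp.2.1, hfw]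
  -- `D` vanishes strictly above `a`, so the functional equation at `a` involves `D a` alone
  have hDa : D a = T (2 * ((ρ w : ℤ) - ρ a)) * invert (D a) := by
    rw [← hD a, Finset.sum_eq_single_of_mem a ha, hR1, evq_one, one_mul]
    intro t ht hta
    by_cases hat : a ≤ t
    · rw [IH t ht (lt_of_le_of_ne hat (Ne.symm hta)), mul_zero]
    · rw [hR0 a t hat, evq_zero, zero_mul]
  refine eq_zero_of_eq_T_mul_invert hDa fun k hk => ?_
  simp only [D, Pi.sub_apply, AddMonoidAlgebra.coeff_sub, Finsupp.sub_apply, hdeg a haw k hk,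
    hPp.coeff_evq_eq_zero hk fun h => absurd h haw.ne, sub_zero]

end Column

section Matching

variable {P : Type*} [PartialOrder P]

open Classical in
def diagCoeff (M : P → P) (x : ℤ[X]) (t : P) : ℤ[X] :=
  if M t = t then 1 + x else if M t < t then X else 1

open Classical in
def crossCoeff (M : P → P) (t : P) : ℤ[X] :=
  if M t = t then 0 else if M t < t then 1 else X

/-- `T_M + 1` applied to `Σ_t f t · m_t`, where `T_M = TMact M (evq x)`.  On the column
`P_{·,M w}` it gives `P_{t',M w} + x_t · P_{t'',M w}`. -/
def matchStep (M : P → P) (x : ℤ[X]) (f : P → ℤ[T;T⁻¹]) (t : P) : ℤ[T;T⁻¹] :=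
  evq (diagCoeff M x t) * f t + evq (crossCoeff M t) * f (M t)

variable {M : P → P} {x : ℤ[X]} {t : P}

theorem diagCoeff_of_eq (h : M t = t) : diagCoeff M x t = 1 + x := if_pos h

theorem diagCoeff_of_lt (h : M t < t) : diagCoeff M x t = X := by
  rw [diagCoeff, if_neg h.ne, if_pos h]

theorem diagCoeff_of_gt (h : t < M t) : diagCoeff M x t = 1 := by
  rw [diagCoeff, if_neg h.ne', if_neg h.not_gt]

theorem crossCoeff_of_eq (h : M t = t) : crossCoeff M t = 0 := if_pos h

theorem crossCoeff_of_lt (h : M t < t) : crossCoeff M t = 1 := by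
  rw [crossCoeff, if_neg h.ne, if_pos h]

theorem crossCoeff_of_gt (h : t < M t) : crossCoeff M t = X := by
  rw [crossCoeff, if_neg h.ne', if_neg h.not_gt]

theorem diagCoeff_mul_add_crossCoeff_mul {S : Set (P → P)} {z : ℤ[X]} {R : P → P → ℤ[X]}
    (hR : IsKLRFamily S z R) (hud : UpDownSymmetry S z R) (hM : M ∈ S)
    (hMinv : Function.Involutive M) (hMtri : ∀ t, M t ⋖ t ∨ M t = t ∨ t ⋖ M t)
    (hxz : (x = X ∧ z = -1) ∨ (x = -1 ∧ z = X)) (a t : P) :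
    diagCoeff M x t * R a t + crossCoeff M (M t) * R a (M t) =
      diagCoeff M x (M a) * R a t + crossCoeff M a * R (M a) t := by
  have hz : X - 1 - z = x := by rcases hxz with ⟨rfl, rfl⟩ | ⟨rfl, rfl⟩ <;> ring
  have hx : x * (1 + x) = X * (1 + x) := by rcases hxz with ⟨rfl, rfl⟩ | ⟨rfl, rfl⟩ <;> ring
  have hrec := hR.2.2 M hM
  have hud := hud M hM
  simp only [hz] at hrec hud
  have hrec' : ∀ u, t ⋖ M t → (M u ⋖ u → R u (M t) = R (M u) t) ∧
      (u ⋖ M u → R u (M t) = (X - 1) * R u t + X * R (M u) t) ∧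
      (M u = u → R u (M t) = x * R u t) := fun u ht => by
    simpa only [hMinv t] using hrec u (M t) (by rwa [hMinv t])
  -- each case is an instance of the recursion (at `t` or `M t`) or of the up-down symmetry,
  -- together with `x (1 + x) = q (1 + x)`
  rcases hMtri a with ha | ha | ha <;> rcases hMtri t with ht | ht | ht
  · simp only [diagCoeff, crossCoeff, hMinv a, hMinv t, ha.ne, ha.ne', ha.lt, ha.lt.not_gt,
      ht.ne, ht.ne', ht.lt, ht.lt.not_gt, if_true, if_false]
    have h := (hrec (M a) t ht).2.1 (by rwa [hMinv a])
    rw [hMinv a] at h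
    linear_combination (X - 1) * (hrec a t ht).1 ha - h
  · simp only [diagCoeff, crossCoeff, hMinv a, ha.ne, ha.ne', ha.lt, ha.lt.not_gt, ht,
      if_true, if_false]
    have h := (hud (M a) t (by rwa [hMinv a])).2.2 ht
    rw [hMinv a] at h
    linear_combination -h
  · simp only [diagCoeff, crossCoeff, hMinv a, hMinv t, ha.ne, ha.ne', ha.lt, ha.lt.not_gt,
      ht.ne, ht.ne', ht.lt, ht.lt.not_gt, if_true, if_false]
    linear_combination (hrec' a ht).1 ha
  · simp only [diagCoeff, crossCoeff, hMinv t, ha, ht.ne, ht.ne', ht.lt, ht.lt.not_gt,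
      if_true, if_false]
    linear_combination (X - 1 - x) * (hrec a t ht).2.2 ha - R a (M t) * hx
  · simp only [diagCoeff, crossCoeff, ha, ht, if_true]
  · simp only [diagCoeff, crossCoeff, hMinv t, ha, ht.ne, ht.ne', ht.lt, ht.lt.not_gt,
      if_true, if_false]
    linear_combination (hrec' a ht).2.2 ha
  · simp only [diagCoeff, crossCoeff, hMinv a, hMinv t, ha.ne, ha.ne', ha.lt, ha.lt.not_gt,
      ht.ne, ht.ne', ht.lt, ht.lt.not_gt, if_true, if_false]
    have h : (X - 1 : ℤ[X]) * R a (M t) = (X - 1) * R (M a) t := by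
      linear_combination (hud a t ha).2.1 ht - (hrec a t ht).2.1 ha
    linear_combination X * mul_left_cancel₀ (by simpa using X_sub_C_ne_zero (1 : ℤ)) h
  · simp only [diagCoeff, crossCoeff, hMinv a, ha.ne, ha.ne', ha.lt, ha.lt.not_gt, ht,
      if_true, if_false]
    linear_combination (1 + x - X) * (hud a t ha).2.2 ht + R (M a) t * hx
  · simp only [diagCoeff, crossCoeff, hMinv a, hMinv t, ha.ne, ha.ne', ha.lt, ha.lt.not_gt,
      ht.ne, ht.ne', ht.lt, ht.lt.not_gt, if_true, if_false]
    linear_combination (hrec' a ht).2.1 ha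

theorem sum_evq_mul_matchStep {R : P → P → ℤ[X]} {s : Finset P}
    (hMinv : Function.Involutive M) (hsM : ∀ t ∈ s, M t ∈ s)
    (hRM : ∀ a t, diagCoeff M x t * R a t + crossCoeff M (M t) * R a (M t) =
      diagCoeff M x (M a) * R a t + crossCoeff M a * R (M a) t)
    (f : P → ℤ[T;T⁻¹]) (a : P) :
    ∑ t ∈ s, evq (R a t) * matchStep M x f t =
      evq (diagCoeff M x (M a)) * ∑ t ∈ s, evq (R a t) * f t +
        evq (crossCoeff M a) * ∑ t ∈ s, evq (R (M a) t) * f t := by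
  have hswap : ∑ t ∈ s, evq (R a t) * (evq (crossCoeff M t) * f (M t)) =
      ∑ t ∈ s, evq (crossCoeff M (M t) * R a (M t)) * f t :=
    Finset.sum_nbij' M M hsM hsM (fun t _ => hMinv t) (fun t _ => hMinv t)
      fun t _ => by rw [hMinv t, evq_mul]; ring
  calc ∑ t ∈ s, evq (R a t) * matchStep M x f t
      = ∑ t ∈ s, evq (diagCoeff M x t * R a t + crossCoeff M (M t) * R a (M t)) * f t := by
        simp only [matchStep, mul_add, Finset.sum_add_distrib, hswap, evq_add, add_mul, evq_mul]
        simp only [mul_assoc, mul_left_comm (evq (R a _))]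
    _ = ∑ t ∈ s, evq (diagCoeff M x (M a) * R a t + crossCoeff M a * R (M a) t) * f t := by
        simp only [hRM]
    _ = _ := by
        simp only [evq_add, evq_mul, add_mul, Finset.sum_add_distrib, Finset.mul_sum, mul_assoc]

theorem IsKLSColumn.matchStep {ρ : P → ℕ} {R : P → P → ℤ[X]} {s : Finset P} {w : P}
    {f : P → ℤ[T;T⁻¹]} (hf : IsKLSColumn ρ R s (M w) f) (hρ : ∀ a b, a ⋖ b → ρ b = ρ a + 1)
    (hMw : M w ⋖ w) (hMinv : Function.Involutive M) (hMtri : ∀ t, M t ⋖ t ∨ M t = t ∨ t ⋖ M t)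
    (hsM : ∀ t ∈ s, M t ∈ s)
    (hRM : ∀ a t, diagCoeff M x t * R a t + crossCoeff M (M t) * R a (M t) =
      diagCoeff M x (M a) * R a t + crossCoeff M a * R (M a) t)
    (hx : x = X ∨ x = -1) : IsKLSColumn ρ R s w (matchStep M x f) := by
  intro a
  rw [sum_evq_mul_matchStep hMinv hsM hRM, hf a, hf (M a)]
  have hw : (ρ w : ℤ) = ρ (M w) + 1 := by exact_mod_cast hρ _ _ hMw
  have hT : (T 2 : ℤ[T;T⁻¹]) * T (-2) = 1 := by rw [← T_add]; exact T_zero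
  set m := 2 * ((ρ (M w) : ℤ) - ρ a)
  simp only [_root_.matchStep, map_add, map_mul]
  rcases hMtri a with ha | ha | ha
  · have hMa : M a < M (M a) := by rw [hMinv a]; exact ha.lt
    have hra : (ρ a : ℤ) = ρ (M a) + 1 := by exact_mod_cast hρ _ _ ha
    rw [diagCoeff_of_gt hMa, crossCoeff_of_lt ha.lt, diagCoeff_of_lt ha.lt,
      show 2 * ((ρ (M w) : ℤ) - ρ (M a)) = m + 2 by omega,
      show 2 * ((ρ w : ℤ) - ρ a) = m + 2 by omega, T_add]
    simp only [evq_one, evq_X, map_one, invert_T]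
    linear_combination -(T m * invert (f a)) * hT
  · have hx' : (T 2 : ℤ[T;T⁻¹]) * (1 + invert (evq x)) = 1 + evq x := by
      rcases hx with rfl | rfl
      · simp only [evq_X, invert_T, mul_add, hT]; ring
      · simp
    rw [ha, diagCoeff_of_eq ha, crossCoeff_of_eq ha,
      show 2 * ((ρ w : ℤ) - ρ a) = m + 2 by omega, T_add]
    simp only [evq_add, evq_one, evq_zero, map_add, map_one, map_zero, zero_mul, add_zero]
    linear_combination -(T m * invert (f a)) * hx'
  · have hMa : M (M a) < M a := by rw [hMinv a]; exact ha.lt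
    have hra : (ρ (M a) : ℤ) = ρ a + 1 := by exact_mod_cast hρ _ _ ha
    rw [diagCoeff_of_lt hMa, crossCoeff_of_gt ha.lt, diagCoeff_of_gt ha.lt,
      show 2 * ((ρ (M w) : ℤ) - ρ (M a)) = m - 2 by omega,
      show 2 * ((ρ w : ℤ) - ρ a) = m + 2 by omega, T_add, T_sub]
    simp only [evq_one, evq_X, map_one, invert_T]
    ring

open Classical in
theorem IsKLSFamily.coeff_matchStep {ρ : P → ℕ} {R Pp : P → P → ℤ[X]} {w : P}
    (hPp : IsKLSFamily ρ R Pp) (hρ : ∀ a b, a ⋖ b → ρ b = ρ a + 1) (hMw : M w ⋖ w)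
    (hMinv : Function.Involutive M) (hMtri : ∀ t, M t ⋖ t ∨ M t = t ∨ t ⋖ M t)
    (hx : x = X ∨ x = -1) {a : P} (haw : a ≠ w) (hρa : ρ a < ρ w) {k : ℤ}
    (hk : k < 0 ∨ (ρ w : ℤ) - ρ a ≤ k) :
    (matchStep M x (fun t => evq (Pp t (M w))) a).coeff k =
      if (M a < a ∨ (M a = a ∧ x = X)) ∧ k = (ρ w : ℤ) - ρ a then muC ρ Pp a (M w) else 0 := by
  have hw : (ρ w : ℤ) = ρ (M w) + 1 := by exact_mod_cast hρ _ _ hMw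
  have hk0 : k ≠ 0 := by omega
  have htop : a ≠ M w → (T 2 * evq (Pp a (M w))).coeff k =
      if k = (ρ w : ℤ) - ρ a then muC ρ Pp a (M w) else 0 := fun ha => by
    rw [coeff_T_mul, hPp.coeff_evq_eq_ite ha (by omega)]
    exact if_congr (by omega) rfl rfl
  simp only [matchStep]
  rcases hMtri a with ha | ha | ha
  · have haMw : a ≠ M w := by
      rintro rfl
      exact ha.lt.not_gt (by rw [hMinv w]; exact hMw.lt)
    have hra : (ρ a : ℤ) = ρ (M a) + 1 := by exact_mod_cast hρ _ _ ha
    rw [diagCoeff_of_lt ha.lt, crossCoeff_of_lt ha.lt, evq_X, evq_one, one_mul,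
      AddMonoidAlgebra.coeff_add, Finsupp.add_apply, htop haMw,
      hPp.coeff_evq_eq_zero (by omega) fun _ => hk0, add_zero]
    simp [ha.lt]
  · have haMw : a ≠ M w := by
      rintro rfl
      exact hMw.ne (by rw [← ha, hMinv w])
    rw [diagCoeff_of_eq ha, crossCoeff_of_eq ha, evq_zero, zero_mul, add_zero]
    rcases hx with rfl | rfl
    · rw [evq_add, evq_one, evq_X, add_mul, one_mul, AddMonoidAlgebra.coeff_add,
        Finsupp.add_apply, hPp.coeff_evq_eq_zero (by omega) fun _ => hk0, htop haMw, zero_add]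
      simp [ha]
    · simp [ha, X_ne_neg_one.symm]
  · have hMaMw : M a ≠ M w := fun h => haw (hMinv.injective h)
    have hra : (ρ (M a) : ℤ) = ρ a + 1 := by exact_mod_cast hρ _ _ ha
    rw [diagCoeff_of_gt ha.lt, crossCoeff_of_gt ha.lt, evq_X, evq_one, one_mul,
      AddMonoidAlgebra.coeff_add, Finsupp.add_apply, coeff_T_mul,
      hPp.coeff_evq_eq_zero (by omega) fun _ => hk0,
      hPp.coeff_evq_eq_zero (by omega) fun h => absurd h hMaMw]
    simp [ha.lt.not_gt, ha.ne']

theorem matchStep_apply_eq_min_add_max (f : P → ℤ[T;T⁻¹]) {v v' v'' : P}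
    (hmin : (v' = M v ∧ v'' = v ∧ M v ≤ v) ∨ (v' = v ∧ v'' = M v ∧ v ≤ M v))
    {xv : ℤ[X]} (hxv : (M v = v ∧ xv = x) ∨ (M v ≠ v ∧ xv = X)) :
    matchStep M x f v = f v' + evq xv * f v'' := by
  rcases hxv with ⟨hfix, rfl⟩ | ⟨hne, rfl⟩
  · rcases hmin with ⟨rfl, rfl, -⟩ | ⟨rfl, rfl, -⟩ <;>
      simp [matchStep, diagCoeff_of_eq hfix, crossCoeff_of_eq hfix, hfix, add_mul]
  · rcases hmin with ⟨rfl, rfl, h⟩ | ⟨rfl, rfl, h⟩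
    · simp [matchStep, diagCoeff_of_lt (h.lt_of_ne hne), crossCoeff_of_lt (h.lt_of_ne hne),
        add_comm]
    · simp [matchStep, diagCoeff_of_gt (h.lt_of_ne hne.symm),
        crossCoeff_of_gt (h.lt_of_ne hne.symm)]

end Matching

theorem IsKLSFamily.evq_eq_matchStep_sub_sum {P : Type*} [PartialOrder P] {ρ : P → ℕ}
    {S : Set (P → P)} {x z : ℤ[X]} {R Pp : P → P → ℤ[X]} (hPp : IsKLSFamily ρ R Pp)
    (hR : IsKLRFamily S z R) (hud : UpDownSymmetry S z R)
    (hxz : (x = X ∧ z = -1) ∨ (x = -1 ∧ z = X)) (hρ : ∀ a b, a ⋖ b → ρ b = ρ a + 1)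
    {M : P → P} (hM : M ∈ S) (hMq : IsQSPM M) {w : P} (hMw : M w ⋖ w) {s I : Finset P}
    (hs : ∀ t, t ∈ s ↔ t ≤ w) (hI : ∀ u, u ∈ I ↔ u ≤ w ∧ (M u < u ∨ (M u = u ∧ x = X)))
    {a : P} (ha : a ≤ w) :
    evq (Pp a w) = matchStep M x (fun t => evq (Pp t (M w))) a -
      ∑ u ∈ I, (muC ρ Pp u (M w) : ℤ[T;T⁻¹]) * (T ((ρ w : ℤ) - ρ u) * evq (Pp a u)) := by
  obtain ⟨hMinv, hMtri, hMspm⟩ := hMq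
  have hfin : (Set.Iic w).Finite := s.finite_toSet.subset fun t ht => (hs t).2 ht
  have hsM : ∀ t ∈ s, M t ∈ s := fun t ht =>
    (hs _).2 (mapsTo_Iic_of_map_lt_map_of_covBy hMspm hfin hMw.le ((hs t).1 ht))
  have hw : (ρ w : ℤ) = ρ (M w) + 1 := by exact_mod_cast hρ _ _ hMw
  have hx : x = X ∨ x = -1 := hxz.imp (·.1) (·.1)
  have hμ : ∀ u, muC ρ Pp u (M w) ≠ 0 → ρ u < ρ w := fun u h => by
    have := lt_of_muC_ne_zero h
    omega
  set A := matchStep M x (fun t => evq (Pp t (M w)))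
  set B := fun t =>
    ∑ u ∈ I, (muC ρ Pp u (M w) : ℤ[T;T⁻¹]) * (T ((ρ w : ℤ) - ρ u) * evq (Pp t u))
  have hcol : IsKLSColumn ρ R s w (A - B) :=
    ((hPp.isKLSColumn hR.1 fun t ht => (hs t).2 (ht.trans hMw.le)).matchStep hρ hMw hMinv
      hMtri hsM (diagCoeff_mul_add_crossCoeff_mul hR hud hM hMinv hMtri hxz) hx).sub
      (isKLSColumn_finset_sum I fun u hu => (hPp.isKLSColumn hR.1 fun t ht =>
        (hs t).2 (ht.trans ((hI u).1 hu).1)).intCast_mul_T _ w)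
  have hBw : B w = 0 := Finset.sum_eq_zero fun u hu => by
    by_cases hwu : w ≤ u
    · obtain rfl : u = w := le_antisymm ((hI u).1 hu).1 hwu
      have : muC ρ Pp u (M u) = 0 := by_contra fun h => (hμ u h).ne rfl
      simp [this]
    · simp [hPp.1 w u hwu]
  have hQw : (A - B) w = 1 := by
    simp [A, hBw, matchStep, diagCoeff_of_lt hMw.lt, crossCoeff_of_lt hMw.lt,
      hPp.1 w (M w) hMw.lt.not_ge, hPp.2.1]
  have hdeg : ∀ a < w, ∀ k, (k < 0 ∨ (ρ w : ℤ) - ρ a ≤ k) → ((A - B) a).coeff k = 0 := by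
    intro a haw k hk
    classical
    have hρa := strictMonoOn_Iic_of_covBy hρ hfin haw.le le_rfl haw
    rw [Pi.sub_apply, AddMonoidAlgebra.coeff_sub, Finsupp.sub_apply,
      hPp.coeff_matchStep hρ hMw hMinv hMtri hx haw.ne hρa hk,
      hPp.coeff_sum_intCast_mul_T I _ (fun u _ => hμ u) hk]
    simp [hI, haw.le]
  exact (hPp.eq_of_isKLSColumn hR.1 hR.2.1 hs hcol hQw hdeg ha).symm

theorem KLS_recursion_general {P : Type*} [PartialOrder P] [OrderBot P]
    (ρ : P → ℕ) (hρcov : ∀ a b : P, a ⋖ b → ρ b = ρ a + 1)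
    (hP : IsPircon P) {S : Set (P → P)} (hS : IsPirconSystem S)
    {x z : Polynomial ℤ} (hxz : (x = X ∧ z = -1) ∨ (x = -1 ∧ z = X))
    {Rz : P → P → Polynomial ℤ}
    (hRz : IsKLRFamily S z Rz)
    (hudz : UpDownSymmetry S z Rz)
    {Pz : P → P → Polynomial ℤ} (hPz : IsKLSFamily ρ Rz Pz)
    {v w : P} (hvw : v ≤ w) {M : P → P} (hM : M ∈ S) (hMw : M w ⋖ w)
    {v' v'' : P}
    (hmin : (v' = M v ∧ v'' = v ∧ M v ≤ v) ∨ (v' = v ∧ v'' = M v ∧ v ≤ M v))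
    {xv : Polynomial ℤ} (hxv : (M v = v ∧ xv = x) ∨ (M v ≠ v ∧ xv = X))
    {U : Set P}
    (hU : (x = X ∧ U = {u : P | M u ≤ u}) ∨ (x = -1 ∧ U = {u : P | M u < u})) :
    evq (Pz v w) = evq (Pz v' (M w)) + evq xv * evq (Pz v'' (M w)) -
      ∑ᶠ u ∈ U, ((muC ρ Pz u (M w) : ℤ) : LaurentPolynomial ℤ) *
        (T ((ρ w : ℤ) - (ρ u : ℤ)) * evq (Pz v u)) := by
  classical
  have hfin : (Set.Iic w).Finite := (hP w (not_isMin_of_lt hMw.lt)).1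
  have hU' : ∀ u, u ∈ U ↔ M u < u ∨ (M u = u ∧ x = X) := by
    rcases hU with ⟨rfl, rfl⟩ | ⟨rfl, rfl⟩ <;> simp [le_iff_lt_or_eq, X_ne_neg_one.symm]
  set I := hfin.toFinset.filter (· ∈ U)
  have hI : ∀ u, u ∈ I ↔ u ≤ w ∧ (M u < u ∨ (M u = u ∧ x = X)) := by simp [I, hU']
  rw [hPz.evq_eq_matchStep_sub_sum hRz hudz hxz hρcov hM (hS.1 M hM) hMw
    (fun t => hfin.mem_toFinset) hI hvw, matchStep_apply_eq_min_add_max _ hmin hxv,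
    finsum_mem_eq_sum_of_subset _ ?_ fun u hu => (Finset.mem_filter.1 hu).2]
  rintro u ⟨huU, hu⟩
  have hμ : muC ρ Pz u (M w) ≠ 0 := fun h => hu (by simp [h])
  exact Finset.mem_filter.2 ⟨hfin.mem_toFinset.2 ((hPz.le_of_muC_ne_zero hμ).trans hMw.le), huU⟩

/-- Recursion for the Kazhdan--Lusztig--Stanley polynomials of a pircon system: for
`v ≤ w`, `M ∈ S` with `M(w) ⋖ w`, `v' = min{v, M(v)}`, `v'' = max{v, M(v)}`, and
`x_v = x` if `M(v) = v` and `x_v = q` otherwise,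
`P^z_{v,w} = P^z_{v',M(w)} + x_v·P^z_{v'',M(w)} - Σ_u μ(u,M(w))·q^{ρ(u,w)/2}·P^z_{v,u}`,
the sum being over `{u : M(u) ≤ u}` if `x = q` and over `{u : M(u) < u}` if `x = -1`. -/
theorem KLS_recursion {P : Type*} [PartialOrder P] [OrderBot P]
    (ρ : P → ℕ) (hρ0 : ρ (⊥ : P) = 0) (hρcov : ∀ a b : P, a ⋖ b → ρ b = ρ a + 1)
    (hP : IsPircon P) {S : Set (P → P)} (hS : IsPirconSystem S)
    {x z : Polynomial ℤ} (hxz : (x = X ∧ z = -1) ∨ (x = -1 ∧ z = X))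
    {Rx Rz : P → P → Polynomial ℤ}
    (hRx : IsKLRFamily S x Rx) (hRz : IsKLRFamily S z Rz)
    (hudx : UpDownSymmetry S x Rx) (hudz : UpDownSymmetry S z Rz)
    {Pz : P → P → Polynomial ℤ} (hPz : IsKLSFamily ρ Rz Pz)
    {v w : P} (hvw : v ≤ w) {M : P → P} (hM : M ∈ S) (hMw : M w ⋖ w)
    {v' v'' : P}
    (hmin : (v' = M v ∧ v'' = v ∧ M v ≤ v) ∨ (v' = v ∧ v'' = M v ∧ v ≤ M v))
    {xv : Polynomial ℤ} (hxv : (M v = v ∧ xv = x) ∨ (M v ≠ v ∧ xv = X))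
    {U : Set P}
    (hU : (x = X ∧ U = {u : P | M u ≤ u}) ∨ (x = -1 ∧ U = {u : P | M u < u})) :
    evq (Pz v w) = evq (Pz v' (M w)) + evq xv * evq (Pz v'' (M w)) -
      ∑ᶠ u ∈ U, ((muC ρ Pz u (M w) : ℤ) : LaurentPolynomial ℤ) *
        (T ((ρ w : ℤ) - (ρ u : ℤ)) * evq (Pz v u)) :=
  KLS_recursion_general ρ hρcov hP hS hxz hRz hudz hPz hvw hM hMw hmin hxv hU

end
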